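/- arXiv:math/0506248 — 3 statements merged into one kernel-verified Lean document; each statement's English description precedes it below -/
import Mathlib

section
/- For every integer k ≥ 1, the k-th power of Y satisfies Y^k = k · Σ_{n≥k} n^{n-k-1} q^n / (n−k)!. -/
/-- `Y(q) = Σ_{n≥1} n^{n-1} q^n / n!`. -/
noncomputable def Y : PowerSeries ℚ :=
  PowerSeries.mk fun n => if n = 0 then 0 else (n : ℚ) ^ (n - 1) / n.factorial

section PolyPart
open Polynomial Finset

lemma deg_shift_sub (p : ℚ[X]) (hp : p ≠ 0) :
    (p.comp (X + C 1) - p).degree < p.degree := by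
  have hnd : (X + C (1:ℚ)).natDegree = 1 := natDegree_X_add_C 1
  have hl : (p.comp (X + C 1)).leadingCoeff = p.leadingCoeff := by
    rw [leadingCoeff_comp (by rw [hnd]; norm_num)]
    have : (X + C (1:ℚ)).leadingCoeff = 1 := (monic_X_add_C 1)
    rw [this, one_pow, mul_one]
  have hc0 : p.comp (X + C 1) ≠ 0 := by
    intro h
    apply hp
    rw [← leadingCoeff_eq_zero, ← hl, h, leadingCoeff_zero]
  have hd : (p.comp (X + C 1)).degree = p.degree := by
    rw [degree_eq_natDegree hc0, degree_eq_natDegree hp, natDegree_comp, hnd, mul_one]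
  have := degree_sub_lt hd hc0 hl
  rwa [hd] at this

lemma findiff : ∀ (N : ℕ) (p : ℚ[X]), p.degree < (N : WithBot ℕ) → ∀ x : ℚ,
    ∑ k ∈ Finset.range (N+1), (-1)^k * (N.choose k : ℚ) * p.eval (x + k) = 0 := by
  intro N
  induction N with
  | zero =>
    intro p hp x
    have : p = 0 := by
      rw [← degree_eq_bot]
      exact Nat.WithBot.lt_zero_iff.mp (by exact_mod_cast hp)
    simp [this]
  | succ N ih =>
    intro p hp x
    by_cases hp0 : p = 0
    · simp [hp0]
    have hq : (p.comp (X + C 1) - p).degree < (N : WithBot ℕ) := by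
      calc (p.comp (X + C 1) - p).degree < p.degree := deg_shift_sub p hp0
        _ = (p.natDegree : WithBot ℕ) := degree_eq_natDegree hp0
        _ ≤ (N : WithBot ℕ) := by
            have : p.natDegree < N + 1 := (natDegree_lt_iff_degree_lt hp0).mpr hp
            exact_mod_cast Nat.lt_succ_iff.mp this
    set f : ℕ → ℚ := fun k => (-1)^k * ((N+1).choose k : ℚ) * p.eval (x + k) with hf
    set g : ℕ → ℚ := fun k => (-1)^k * (N.choose k : ℚ) * p.eval (x + k) with hg
    set h : ℕ → ℚ := fun k => (-1)^k * (N.choose k : ℚ) * p.eval (x + k + 1) with hh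
    have claim1 : ∑ k ∈ Finset.range (N+2), f k
        = ∑ k ∈ Finset.range (N+1), g k - ∑ k ∈ Finset.range (N+1), h k := by
      rw [Finset.sum_range_succ' f]
      have hfk : ∀ k, f (k+1) = -(h k) + (-1)^(k+1) * (N.choose (k+1) : ℚ) * p.eval (x + k + 1) := by
        intro k
        simp only [hf, hh, Nat.choose_succ_succ']
        push_cast [add_assoc]
        ring
      have hsum2 : ∑ k ∈ Finset.range (N+1), (-1)^(k+1) * (N.choose (k+1) : ℚ) * p.eval (x + k + 1)
          = ∑ k ∈ Finset.range (N+1), g k - g 0 := by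
        rw [Finset.sum_range_succ' g]
        have : ∑ k ∈ Finset.range (N+1), (-1)^(k+1) * (N.choose (k+1) : ℚ) * p.eval (x + k + 1)
            = ∑ k ∈ Finset.range N, g (k+1) := by
          rw [Finset.sum_range_succ (fun k => (-1)^(k+1) * (N.choose (k+1) : ℚ) * p.eval (x + k + 1))]
          rw [Nat.choose_succ_self]
          simp only [Nat.cast_zero, mul_zero, zero_mul, add_zero]
          apply Finset.sum_congr rfl
          intro k _
          simp only [hg]
          push_cast [add_assoc]
          ring
        rw [this]
        ring
      calc (∑ k ∈ Finset.range (N+1), f (k+1)) + f 0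
          = (∑ k ∈ Finset.range (N+1),
            (-(h k) + (-1)^(k+1) * (N.choose (k+1) : ℚ) * p.eval (x + k + 1))) + f 0 := by
            rw [Finset.sum_congr rfl (fun k _ => hfk k)]
        _ = (- ∑ k ∈ Finset.range (N+1), h k
              + (∑ k ∈ Finset.range (N+1), g k - g 0)) + f 0 := by
            rw [Finset.sum_add_distrib, Finset.sum_neg_distrib, hsum2]
        _ = ∑ k ∈ Finset.range (N+1), g k - ∑ k ∈ Finset.range (N+1), h k := by
            have hf0 : f 0 = g 0 := by simp [hf, hg]
            rw [hf0]; ring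
    have claim2 : ∑ k ∈ Finset.range (N+1), g k - ∑ k ∈ Finset.range (N+1), h k
        = - ∑ k ∈ Finset.range (N+1),
            (-1)^k * (N.choose k : ℚ) * (p.comp (X + C 1) - p).eval (x + k) := by
      rw [← Finset.sum_sub_distrib, ← Finset.sum_neg_distrib]
      apply Finset.sum_congr rfl
      intro k _
      simp only [hg, hh, eval_sub, eval_comp, eval_add, eval_X, eval_C]
      ring
    have hcast : ∀ k : ℕ, x + ((k : ℚ)) = x + (k:ℚ) := fun _ => rfl
    calc ∑ k ∈ Finset.range (N+1+1), (-1)^k * ((N+1).choose k : ℚ) * p.eval (x + k)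
        = ∑ k ∈ Finset.range (N+2), f k := rfl
      _ = ∑ k ∈ Finset.range (N+1), g k - ∑ k ∈ Finset.range (N+1), h k := claim1
      _ = - ∑ k ∈ Finset.range (N+1),
            (-1)^k * (N.choose k : ℚ) * (p.comp (X + C 1) - p).eval (x + k) := claim2
      _ = 0 := by rw [ih _ hq x, neg_zero]

lemma poly_ext (p q : ℚ[X]) (h1 : derivative p = derivative q) (a : ℚ)
    (h2 : p.eval a = q.eval a) : p = q := by
  have h3 : derivative (p - q) = 0 := by rw [derivative_sub, h1, sub_self]
  have hc := eq_C_of_derivative_eq_zero h3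
  have h4 := congrArg (eval a) hc
  simp only [eval_sub, eval_C, h2, sub_self] at h4
  rw [← h4, map_zero] at hc
  exact sub_eq_zero.mp hc

lemma abelP (n : ℕ) (hn : 1 ≤ n) : ∀ c : ℚ,
    ∑ k ∈ Finset.Icc 1 n, ((n.choose k : ℚ) * (k:ℚ)^(k-1)) • (X + C (c + ((n-k : ℕ) : ℚ)))^(n-k)
      = (n : ℚ) • (X + C (c + n))^(n-1) := by
  induction n, hn using Nat.le_induction with
  | base => intro c; simp
  | succ n hn ih =>
    intro c
    refine poly_ext _ _ ?_ (-(c + (n+1:ℚ))) ?_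
    · -- derivatives agree
      rw [map_sum]
      have hterm : ∀ k ∈ Finset.Icc 1 (n+1),
          derivative ((((n+1).choose k : ℚ) * (k:ℚ)^(k-1)) • (X + C (c + ((n+1-k : ℕ):ℚ)))^(n+1-k))
          = ((((n+1).choose k * (n+1-k) : ℕ) : ℚ) * (k:ℚ)^(k-1))
              • (X + C (c + ((n+1-k:ℕ):ℚ)))^(n-k) := by
        intro k hk
        rw [derivative_smul, derivative_pow]
        rw [derivative_X_add_C]
        rw [mul_one]
        have he : n+1-k-1 = n-k := by omega
        rw [he]
        rw [← smul_eq_C_mul, smul_smul]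
        push_cast
        ring_nf
      rw [Finset.sum_congr rfl hterm]
      rw [Finset.sum_Icc_succ_top (by omega : 1 ≤ n+1)]
      simp only [Nat.sub_self, Nat.mul_zero, Nat.cast_zero, zero_mul, zero_smul, add_zero]
      have hterm2 : ∀ k ∈ Finset.Icc 1 n,
          ((((n+1).choose k * (n+1-k) : ℕ) : ℚ) * (k:ℚ)^(k-1))
              • (X + C (c + ((n+1-k:ℕ):ℚ)))^(n-k)
          = (n+1:ℚ) • (((n.choose k : ℚ) * (k:ℚ)^(k-1)) • (X + C ((c+1) + ((n-k:ℕ):ℚ)))^(n-k)) := by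
        intro k hk
        simp only [Finset.mem_Icc] at hk
        have h1 : (n+1).choose k * (n+1-k) = n.choose k * (n+1) := (Nat.choose_mul_succ_eq n k).symm
        have h2 : ((n+1-k : ℕ) : ℚ) = ((n-k : ℕ) : ℚ) + 1 := by
          have : n+1-k = (n-k)+1 := by omega
          rw [this]; push_cast; ring
        rw [h1, h2, smul_smul]
        have h3 : c + (((n-k:ℕ):ℚ) + 1) = (c+1) + ((n-k:ℕ):ℚ) := by ring
        rw [h3]
        congr 1
        push_cast
        ring
      rw [Finset.sum_congr rfl hterm2, ← Finset.smul_sum, ih (c+1)]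
      rw [derivative_smul, derivative_pow, derivative_X_add_C, mul_one]
      rw [← smul_eq_C_mul, smul_smul, smul_smul]
      simp only [Nat.add_sub_cancel]
      have h4 : c + 1 + (n:ℚ) = c + ((n+1:ℕ):ℚ) := by push_cast; ring
      rw [h4]
      congr 1
      push_cast; ring
    · -- evaluations agree
      rw [eval_finset_sum]
      have hterm : ∀ k ∈ Finset.Icc 1 (n+1),
          eval (-(c + (n+1:ℚ))) ((((n+1).choose k : ℚ) * (k:ℚ)^(k-1)) • (X + C (c + ((n+1-k : ℕ):ℚ)))^(n+1-k))
          = (-1:ℚ)^(n+1) * ((-1)^k * ((n+1).choose k : ℚ) * (k:ℚ)^n) := by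
        intro k hk
        simp only [Finset.mem_Icc] at hk
        rw [eval_smul, eval_pow, eval_add, eval_X, eval_C]
        have hb : -(c + (n+1:ℚ)) + (c + ((n+1-k : ℕ):ℚ)) = -(k:ℚ) := by
          have : ((n+1-k : ℕ) : ℚ) = (n:ℚ) + 1 - (k:ℚ) := by
            rw [Nat.cast_sub (by omega : k ≤ n+1)]; push_cast; ring
          rw [this]; ring
        rw [hb]
        have hneg : (-(k:ℚ))^(n+1-k) = (-1)^(n+1-k) * (k:ℚ)^(n+1-k) := by
          rw [neg_pow]
        have hsgn : ((-1:ℚ))^(n+1-k) = (-1)^(n+1) * (-1)^k := by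
          have h2 : ((-1:ℚ))^k * (-1)^k = 1 := by rw [← mul_pow]; norm_num
          calc ((-1:ℚ))^(n+1-k) = (-1)^(n+1-k) * ((-1)^k * (-1)^k) := by rw [h2, mul_one]
            _ = ((-1)^(n+1-k) * (-1)^k) * (-1)^k := by ring
            _ = (-1)^(n+1) * (-1)^k := by rw [← pow_add, Nat.sub_add_cancel (by omega : k ≤ n+1)]
        have hpow : (k:ℚ)^(k-1) * (k:ℚ)^(n+1-k) = (k:ℚ)^n := by
          rw [← pow_add]
          congr 1
          omega
        rw [hneg, hsgn]
        calc (((n+1).choose k : ℚ) * (k:ℚ)^(k-1)) • ((-1:ℚ)^(n+1) * (-1:ℚ)^k * (k:ℚ)^(n+1-k))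
            = (-1:ℚ)^(n+1) * ((-1)^k * ((n+1).choose k : ℚ) * ((k:ℚ)^(k-1) * (k:ℚ)^(n+1-k))) := by
              rw [smul_eq_mul]; ring
          _ = _ := by rw [hpow]
      rw [Finset.sum_congr rfl hterm, ← Finset.mul_sum]
      have hfd := findiff (n+1) (X^n : ℚ[X]) (by
          rw [degree_X_pow]
          exact_mod_cast Nat.lt_succ_self n) 0
      have hconv : ∑ k ∈ Finset.range (n+2), (-1:ℚ)^k * ((n+1).choose k : ℚ) * eval ((0:ℚ) + k) (X^n : ℚ[X])
          = ∑ k ∈ Finset.Icc 1 (n+1), (-1:ℚ)^k * ((n+1).choose k : ℚ) * (k:ℚ)^n := by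
        have : Finset.range (n+2) = Finset.Ico 0 (n+2) := by rw [Finset.range_eq_Ico]
        rw [this, Finset.sum_eq_sum_Ico_succ_bot (by omega)]
        simp only [eval_pow, eval_X, Nat.cast_zero, add_zero, zero_add]
        rw [zero_pow (by omega : n ≠ 0), mul_zero, zero_add]
        have h2 : Finset.Ico 1 (n+2) = Finset.Icc 1 (n+1) := by
          rw [show n+2 = (n+1)+1 from rfl, Finset.Ico_add_one_right_eq_Icc]
        rw [h2]
      rw [hconv] at hfd
      rw [hfd, mul_zero]
      rw [eval_smul, eval_pow, eval_add, eval_X, eval_C]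
      rw [show -(c + ((n:ℚ)+1)) + (c + ((n+1:ℕ):ℚ)) = 0 by push_cast; ring]
      rw [zero_pow (by omega : n+1-1 ≠ 0)]
      simp

lemma abel_sum (m : ℕ) (hm : 1 ≤ m) :
    ∑ k ∈ Finset.Icc 1 m, (m.choose k : ℚ) * (k:ℚ)^(k-1) * ((m-k : ℕ):ℚ)^(m-k)
      = (m:ℚ)^m := by
  have h := congrArg (Polynomial.eval (0:ℚ)) (abelP m hm 0)
  simp only [eval_finset_sum, eval_smul, eval_pow, eval_add, eval_X, eval_C, smul_eq_mul,
    zero_add] at h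
  rw [h, ← pow_succ']
  try (congr 1; omega)


end PolyPart

section PSPart
open Finset PowerSeries

def Bc (k : ℕ) : ℕ → ℚ := fun n =>
  if n < k then 0 else (k : ℚ) * (n : ℚ) ^ ((n : ℤ) - k - 1) / (n - k).factorial


lemma coeff_X_mul_deriv (f : ℚ⟦X⟧) (n : ℕ) :
    PowerSeries.coeff n ((PowerSeries.X : ℚ⟦X⟧) * PowerSeries.derivative ℚ f)
      = n * PowerSeries.coeff n f := by
  cases n with
  | zero =>
    rw [PowerSeries.coeff_zero_eq_constantCoeff, map_mul, PowerSeries.constantCoeff_X, zero_mul]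
    simp
  | succ n =>
    rw [PowerSeries.coeff_succ_X_mul, PowerSeries.coeff_derivative]
    push_cast
    ring

lemma hODE : (PowerSeries.X : ℚ⟦X⟧) * PowerSeries.derivative ℚ Y
    = Y + Y * (PowerSeries.X * PowerSeries.derivative ℚ Y) := by
  ext m
  rw [coeff_X_mul_deriv, map_add]
  cases m with
  | zero =>
    simp [Y, PowerSeries.coeff_mul]
  | succ n =>
    set m := n + 1 with hm
    rw [PowerSeries.coeff_mul]
    have hterm : ∀ p ∈ Finset.HasAntidiagonal.antidiagonal m,
        PowerSeries.coeff p.1 Y * PowerSeries.coeff p.2 (PowerSeries.X * PowerSeries.derivative ℚ Y)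
        = PowerSeries.coeff p.1 Y * ((p.2 : ℚ) * PowerSeries.coeff p.2 Y) := by
      intro p _
      rw [coeff_X_mul_deriv]
    rw [Finset.sum_congr rfl hterm]
    rw [Finset.Nat.sum_antidiagonal_eq_sum_range_succ_mk]
    -- peel off i = 0
    rw [Finset.range_eq_Ico, Finset.sum_eq_sum_Ico_succ_bot (by omega : 0 < m + 1),
      Finset.Ico_add_one_right_eq_Icc]
    have hY0 : PowerSeries.coeff 0 Y = 0 := by simp [Y]
    rw [hY0, zero_mul, zero_add]
    -- peel off i = m
    rw [Finset.sum_Icc_succ_top (by omega : 1 ≤ m)]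
    rw [Nat.sub_self]
    simp only [Nat.cast_zero, zero_mul, mul_zero, add_zero]
    have hterm2 : ∀ i ∈ Finset.Icc 1 n,
        PowerSeries.coeff i Y * (((m - i : ℕ) : ℚ) * PowerSeries.coeff (m - i) Y)
        = (m.choose i : ℚ) * (i:ℚ)^(i-1) * ((m-i : ℕ):ℚ)^(m-i) / m.factorial := by
      intro i hi
      simp only [Finset.mem_Icc] at hi
      have hi1 : i ≠ 0 := by omega
      have hmi : m - i ≠ 0 := by omega
      simp only [Y, PowerSeries.coeff_mk, if_neg hi1, if_neg hmi]
      have hfact : (m.choose i : ℚ) * i.factorial * (m-i).factorial = m.factorial := by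
        exact_mod_cast congrArg (Nat.cast : ℕ → ℚ)
          (Nat.choose_mul_factorial_mul_factorial (by omega : i ≤ m))
      have hpow : ((m-i : ℕ):ℚ) * ((m-i : ℕ):ℚ)^(m-i-1) = ((m-i:ℕ):ℚ)^(m-i) := by
        rw [← pow_succ']
        congr 1
        omega
      have hif : (i.factorial : ℚ) ≠ 0 := by exact_mod_cast i.factorial_ne_zero
      have hmif : ((m-i).factorial : ℚ) ≠ 0 := by exact_mod_cast (m-i).factorial_ne_zero
      have hmf : (m.factorial : ℚ) ≠ 0 := by exact_mod_cast m.factorial_ne_zero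
      have hc0 : ((m.choose i : ℕ):ℚ) ≠ 0 := by
        have := Nat.choose_pos (by omega : i ≤ m)
        positivity
      rw [← hpow, ← hfact]
      field_simp
      try ring
    rw [Finset.sum_congr rfl hterm2, ← Finset.sum_div]
    have habel := abel_sum m (by omega)
    rw [Finset.sum_Icc_succ_top (by omega : 1 ≤ m)] at habel
    rw [Nat.sub_self] at habel
    simp only [Nat.choose_self, Nat.cast_one, one_mul, pow_zero, mul_one] at habel
    have hsum : ∑ i ∈ Finset.Icc 1 n, (m.choose i : ℚ) * (i:ℚ)^(i-1) * ((m-i : ℕ):ℚ)^(m-i)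
        = (m:ℚ)^m - (m:ℚ)^(m-1) := by
      have := habel
      rw [← hm] at this
      simp only [Nat.choose_self, Nat.cast_one, one_mul] at this
      -- habel : ∑_{Icc 1 n} + m^(m-1) = m^m
      linarith [this]
    rw [hsum]
    -- goal : m * coeff m Y = coeff m Y + (m^m - m^(m-1))/m!
    have hm0 : m ≠ 0 := by omega
    simp only [Y, PowerSeries.coeff_mk, if_neg hm0]
    have hmf : (m.factorial : ℚ) ≠ 0 := by exact_mod_cast m.factorial_ne_zero
    have hme : m - 1 + 1 = m := by omega
    have hpowm : (m:ℚ)^m = (m:ℚ) * (m:ℚ)^(m-1) := by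
      rw [← pow_succ', hme]
    rw [hpowm]
    field_simp
    try ring

lemma Bstep (k r : ℕ) (hk : 1 ≤ k) (hr : 1 ≤ r) :
    ((k:ℚ)+1) * ((r:ℚ) - k) * Bc k r / (k * r) = Bc (k+1) r := by
  by_cases h1 : r < k
  · have h2 : r < k+1 := by omega
    simp [Bc, if_pos h1, if_pos h2]
    intro h; exact absurd h (by omega)
  · by_cases h2 : r < k+1
    · have hrk : r = k := by omega
      subst hrk
      simp [Bc, if_neg h1, if_pos h2]
    · have hkr : k + 1 ≤ r := by omega
      simp only [Bc, if_neg h1, if_neg h2]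
      have hr0 : (r:ℚ) ≠ 0 := by
        have : 0 < r := by omega
        exact_mod_cast this.ne'
      have hk0 : (k:ℚ) ≠ 0 := by
        have : 0 < k := by omega
        exact_mod_cast this.ne'
      have hz : (r:ℚ)^((r:ℤ) - k - 1) = (r:ℚ)^((r:ℤ) - (↑(k+1):ℤ) - 1) * (r:ℚ) := by
        rw [← zpow_add_one₀ hr0]
        congr 1
        push_cast
        ring
      have hfs : r - k = (r - (k+1)) + 1 := by omega
      have hfac : ((r - k).factorial : ℚ) = ((r:ℚ) - k) * ((r - (k+1)).factorial : ℚ) := by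
        rw [hfs, Nat.factorial_succ]
        have : ((r - (k+1) + 1 : ℕ) : ℚ) = (r:ℚ) - k := by
          rw [Nat.cast_add, Nat.cast_sub (by omega : k+1 ≤ r)]
          push_cast
          ring
        rw [Nat.cast_mul, this]
      rw [hz, hfac]
      have hfac0 : (((r - (k+1)).factorial : ℕ) : ℚ) ≠ 0 := by
        exact_mod_cast (r - (k+1)).factorial_ne_zero
      have hrk0 : (r:ℚ) - k ≠ 0 := by
        have : ((r:ℚ)) - k > 0 := by
          have : (k:ℚ) < r := by exact_mod_cast (by omega : k < r)
          linarith
        linarith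
      field_simp
      push_cast
      ring

/-- `Y^k = k · Σ_{n≥k} n^{n-k-1} q^n / (n-k)!` for every `k ≥ 1`. -/
theorem Y_pow (k : ℕ) (hk : 1 ≤ k) :
    Y ^ k = PowerSeries.mk fun n =>
      if n < k then 0
      else (k : ℚ) * (n : ℚ) ^ ((n : ℤ) - k - 1) / (n - k).factorial := by
  induction k, hk using Nat.le_induction with
  | base =>
    rw [pow_one]
    ext n
    rw [PowerSeries.coeff_mk]
    cases n with
    | zero => simp [Y]
    | succ n =>
      have h1 : ¬ (n + 1 < 1) := by omega
      rw [if_neg h1]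
      simp only [Y, PowerSeries.coeff_mk, if_neg (Nat.succ_ne_zero n)]
      cases n with
      | zero => norm_num
      | succ n =>
        simp only [Nat.cast_one, one_mul]
        have e2 : ((n+1+1:ℕ):ℤ) - 1 - 1 = ((n:ℕ):ℤ) := by push_cast; ring
        rw [e2, zpow_natCast]
        have e1 : n + 1 + 1 - 1 = n + 1 := rfl
        rw [e1, Nat.factorial_succ (n+1), pow_succ]
        have hf1 : (((n+1).factorial : ℕ):ℚ) ≠ 0 := by exact_mod_cast (n+1).factorial_ne_zero
        push_cast
        field_simp
  | succ k hk ih =>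
    show Y^(k+1) = PowerSeries.mk (Bc (k+1))
    have ih' : Y ^ k = PowerSeries.mk (Bc k) := ih
    set D := PowerSeries.derivative ℚ with hD
    have h1 : (PowerSeries.X : ℚ⟦X⟧) * D (Y^k) = (k:ℕ) • (Y^(k-1) * (PowerSeries.X * D Y)) := by
      rw [hD, Derivation.leibniz_pow]
      simp only [smul_eq_mul]
      rw [mul_smul_comm, mul_left_comm]
    have h2 : (PowerSeries.X : ℚ⟦X⟧) * D (Y^(k+1)) = (k+1:ℕ) • (Y^k * (PowerSeries.X * D Y)) := by
      rw [hD, Derivation.leibniz_pow]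
      simp only [smul_eq_mul, Nat.add_sub_cancel]
      rw [mul_smul_comm, mul_left_comm]
    have h3 : Y^(k-1) * (PowerSeries.X * D Y) = Y^k + Y^k * (PowerSeries.X * D Y) := by
      conv_lhs => rw [hD, hODE]
      rw [mul_add, ← mul_assoc, ← pow_succ, Nat.sub_add_cancel hk, hD]
    ext r
    cases r with
    | zero =>
      have : PowerSeries.constantCoeff (Y^(k+1)) = 0 := by
        rw [map_pow]
        have : PowerSeries.constantCoeff Y = 0 := by simp [Y]
        rw [this, zero_pow (by omega : k+1 ≠ 0)]
      rw [PowerSeries.coeff_zero_eq_constantCoeff, this]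
      have : PowerSeries.coeff 0 (PowerSeries.mk (Bc (k+1))) = Bc (k+1) 0 :=
        PowerSeries.coeff_mk 0 _
      rw [← PowerSeries.coeff_zero_eq_constantCoeff, this, Bc, if_pos (by omega : 0 < k+1)]
    | succ m =>
      have hr1 : 1 ≤ m + 1 := by omega
      have hk0 : (k:ℚ) ≠ 0 := by
        have : 0 < k := by omega
        exact_mod_cast this.ne'
      have hr0 : (m:ℚ) + 1 ≠ 0 := by positivity
      have c1 : ((m:ℚ)+1) * PowerSeries.coeff (m+1) (Y^k)
          = (k:ℚ) * PowerSeries.coeff (m+1) (Y^(k-1) * (PowerSeries.X * D Y)) := by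
        have h := congrArg (PowerSeries.coeff (m+1)) h1
        rw [coeff_X_mul_deriv, map_nsmul, nsmul_eq_mul] at h
        push_cast at h
        exact h
      have c2 : ((m:ℚ)+1) * PowerSeries.coeff (m+1) (Y^(k+1))
          = ((k:ℚ)+1) * PowerSeries.coeff (m+1) (Y^k * (PowerSeries.X * D Y)) := by
        have h := congrArg (PowerSeries.coeff (m+1)) h2
        rw [coeff_X_mul_deriv, map_nsmul, nsmul_eq_mul] at h
        push_cast at h
        exact h
      have c3 : PowerSeries.coeff (m+1) (Y^(k-1) * (PowerSeries.X * D Y))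
          = PowerSeries.coeff (m+1) (Y^k) + PowerSeries.coeff (m+1) (Y^k * (PowerSeries.X * D Y)) := by
        rw [h3, map_add]
      have hBk : PowerSeries.coeff (m+1) (Y^k) = Bc k (m+1) := by
        rw [ih', PowerSeries.coeff_mk]
      have cW : PowerSeries.coeff (m+1) (Y^k * (PowerSeries.X * D Y))
          = (((m:ℚ)+1) - k) * Bc k (m+1) / k := by
        rw [c3, hBk] at c1
        field_simp
        linarith [c1]
      have cfin : PowerSeries.coeff (m+1) (Y^(k+1))
          = ((k:ℚ)+1) * (((m:ℚ)+1) - k) * Bc k (m+1) / (k * ((m:ℚ)+1)) := by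
        rw [cW] at c2
        field_simp at c2 ⊢
        linarith [c2]
      have hB := Bstep k (m+1) hk hr1
      push_cast at hB
      rw [cfin, PowerSeries.coeff_mk, ← hB]

end PSPart
end

section
/- For every n ≥ 1, the number A_n = Σ_{p+q=n, p,q≥1} (n!/(p! q!)) p^p q^q satisfies A_n = n! · Σ_{k=0}^{n−2} n^k / k!. -/
/-- `A_n = Σ_{p+q=n, p,q≥1} (n!/(p!·q!)) p^p q^q = Σ_{p=1}^{n-1} C(n,p) p^p (n-p)^{n-p}`. -/
def A (n : ℕ) : ℕ :=
  ∑ p ∈ Finset.Ioo 0 n, n.choose p * p ^ p * (n - p) ^ (n - p)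

section Aux
open Finset Polynomial

/-- Alternating binomial sum `∑ (-1)^k C(n,k) (x+k)^m`. -/
def Sn (n : ℕ) (x : ℚ) (m : ℕ) : ℚ :=
  ∑ k ∈ range (n+1), (-1 : ℚ)^k * (n.choose k) * (x + k)^m

lemma Sn_succ (n : ℕ) (x : ℚ) (m : ℕ) : Sn (n+1) x m = Sn n x m - Sn n (x+1) m := by
  have hb : ∑ k ∈ range (n+1), (-1:ℚ)^(k+1) * (n.choose (k+1)) * (x + ((k+1:ℕ):ℚ))^m
      = Sn n x m - x^m := by
    rw [sum_range_succ, Nat.choose_succ_self, Sn, sum_range_succ']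
    simp only [Nat.cast_zero, Nat.choose_zero_right, Nat.cast_one, Nat.cast_ofNat]
    push_cast
    ring
  have ha : ∑ k ∈ range (n+1), (-1:ℚ)^(k+1) * (n.choose k) * ((x+1) + (k:ℚ))^m
      = - Sn n (x+1) m := by
    rw [Sn, ← Finset.sum_neg_distrib]
    apply sum_congr rfl; intro k _; ring
  have hsplit : ∀ k ∈ range (n+1), (-1:ℚ)^(k+1) * (((n+1).choose (k+1) : ℕ):ℚ) * (x + ((k+1:ℕ):ℚ))^m
      = (-1:ℚ)^(k+1) * (n.choose k) * ((x+1) + (k:ℚ))^m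
        + (-1:ℚ)^(k+1) * (n.choose (k+1)) * (x + ((k+1:ℕ):ℚ))^m := by
    intro k _
    rw [Nat.choose_succ_succ]
    push_cast
    ring
  rw [Sn, sum_range_succ', sum_congr rfl hsplit, sum_add_distrib, ha, hb]
  simp only [Nat.choose_zero_right, Nat.cast_one, Nat.cast_zero, pow_zero]
  push_cast
  ring

lemma Sn_binom (n : ℕ) (x : ℚ) (m : ℕ) :
    Sn n (x+1) m = ∑ j ∈ range (m+1), (m.choose j : ℚ) * Sn n x j := by
  unfold Sn
  have : ∀ j ∈ range (m+1), (m.choose j : ℚ) * ∑ k ∈ range (n+1), (-1:ℚ)^k * (n.choose k) * (x + k)^j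
      = ∑ k ∈ range (n+1), (-1:ℚ)^k * (n.choose k) * ((x + k)^j * 1^(m-j) * (m.choose j)) := by
    intro j _
    rw [Finset.mul_sum]
    exact sum_congr rfl fun k _ => by ring
  rw [sum_congr rfl this, Finset.sum_comm]
  apply sum_congr rfl
  intro k _
  rw [← Finset.mul_sum, ← add_pow]
  ring_nf

lemma Sn_eq (n : ℕ) : ∀ (x : ℚ) (m : ℕ), m ≤ n →
    Sn n x m = if m = n then (-1:ℚ)^n * n.factorial else 0 := by
  induction n with
  | zero =>
    intro x m hm
    interval_cases m
    simp [Sn]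
  | succ n IH =>
    intro x m hm
    rw [Sn_succ, Sn_binom, sum_range_succ, Nat.choose_self]
    rcases Nat.lt_or_ge m (n+1) with h | h
    · have hm' : m ≤ n := by omega
      have hz : ∀ j ∈ range m, (m.choose j : ℚ) * Sn n x j = 0 := by
        intro j hj
        rw [IH x j (by simp at hj; omega), if_neg (by simp at hj; omega)]
        ring
      rw [sum_congr rfl hz]
      simp [if_neg (by omega : ¬ m = n + 1)]
    · have hm1 : m = n + 1 := le_antisymm hm h
      subst hm1
      have hIH : ∀ j, j ≤ n → Sn n x j = if j = n then (-1:ℚ)^n * n.factorial else 0 := IH x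
      have hcalc : ∑ j ∈ range (n+1), ((n+1).choose j : ℚ) * Sn n x j
          = ((n+1).choose n : ℚ) * ((-1:ℚ)^n * n.factorial) := by
        rw [Finset.sum_eq_single n]
        · rw [hIH n le_rfl, if_pos rfl]
        · intro j hj hne
          rw [hIH j (by simp at hj; omega), if_neg hne, mul_zero]
        · intro h'; exact absurd (self_mem_range_succ n) h'
      rw [hcalc, if_pos rfl, Nat.choose_succ_self_right]
      push_cast [Nat.factorial_succ]
      ring

noncomputable def Lp (n : ℕ) (x : ℚ) : ℚ[X] :=
  ∑ k ∈ Finset.range (n+1), Polynomial.C ((n.choose k : ℚ) * (x + k)^k) *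
    (Polynomial.X + Polynomial.C ((n : ℚ) - k))^(n - k)

noncomputable def Rp (n : ℕ) (x : ℚ) : ℚ[X] :=
  ∑ j ∈ Finset.range (n+1), Polynomial.C ((n.descFactorial j : ℚ)) *
    (Polynomial.X + Polynomial.C (x + n))^(n - j)

lemma derivative_Lp (n : ℕ) (x : ℚ) :
    derivative (Lp (n+1) x) = C ((n:ℚ)+1) * (Lp n x).comp (X + 1) := by
  unfold Lp
  rw [derivative_sum, sum_range_succ]
  rw [Nat.sub_self, pow_zero, mul_one, derivative_C, add_zero]
  rw [Polynomial.sum_comp, Finset.mul_sum]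
  apply sum_congr rfl
  intro k hk
  have hk' : k ≤ n := by simp at hk; omega
  rw [derivative_C_mul, derivative_X_add_C_pow]
  rw [mul_comp, pow_comp, add_comp, C_comp, C_comp, X_comp]
  have h1 : n + 1 - k - 1 = n - k := by omega
  have h2 : ((n+1-k : ℕ) : ℚ) = (n:ℚ) + 1 - k := by push_cast [Nat.cast_sub (by omega : k ≤ n+1)]; ring
  have h3 : X + 1 + Polynomial.C ((n:ℚ) - k) = X + Polynomial.C ((n:ℚ) + 1 - k) := by
    rw [add_assoc]
    congr 1
    rw [← C_1, ← C_add]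
    congr 1
    ring
  have h5 : ((n+1:ℕ):ℚ) - (k:ℚ) = (n:ℚ)+1-k := by push_cast; ring
  rw [h1, h2, h3, h5, ← mul_assoc, ← C_mul, ← mul_assoc, ← C_mul]
  congr 1
  rw [C_inj]
  have hnat : ((n+1).choose k : ℚ) * ((n:ℚ)+1-k) = ((n:ℚ)+1) * (n.choose k) := by
    have := Nat.choose_mul_succ_eq n k
    have hc : ((n.choose k * (n+1) : ℕ) : ℚ) = (((n+1).choose k * (n+1-k) : ℕ) : ℚ) := by
      exact_mod_cast congrArg (Nat.cast (R := ℚ)) this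
    push_cast [Nat.cast_sub (by omega : k ≤ n+1)] at hc
    linarith [hc]
  linear_combination ((x + (k:ℚ))^k) * hnat

lemma derivative_Rp (n : ℕ) (x : ℚ) :
    derivative (Rp (n+1) x) = C ((n:ℚ)+1) * (Rp n x).comp (X + 1) := by
  unfold Rp
  rw [derivative_sum, sum_range_succ]
  rw [Nat.sub_self, pow_zero, mul_one, derivative_C, add_zero]
  rw [Polynomial.sum_comp, Finset.mul_sum]
  apply sum_congr rfl
  intro j hj
  have hj' : j ≤ n := by simp at hj; omega
  rw [derivative_C_mul, derivative_X_add_C_pow]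
  rw [mul_comp, pow_comp, add_comp, C_comp, C_comp, X_comp]
  have h1 : n + 1 - j - 1 = n - j := by omega
  have h3 : X + 1 + Polynomial.C (x + (n:ℚ)) = X + Polynomial.C (x + ((n:ℚ) + 1)) := by
    rw [add_assoc]; congr 1; rw [← C_1, ← C_add]; congr 1; ring
  have h4 : (x + ((n+1:ℕ):ℚ)) = x + ((n:ℚ)+1) := by push_cast; ring
  rw [h1, h4, h3, ← mul_assoc, ← C_mul, ← mul_assoc, ← C_mul]
  congr 1
  rw [C_inj]
  have hnat : (n+1-j) * (n+1).descFactorial j = (n+1) * n.descFactorial j := by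
    rw [← Nat.descFactorial_succ, Nat.succ_descFactorial_succ]
  have h2 : ((n+1-j : ℕ) : ℚ) = (n:ℚ) + 1 - j := by push_cast [Nat.cast_sub (by omega : j ≤ n+1)]; ring
  have hq : ((n+1-j : ℕ) : ℚ) * ((n+1).descFactorial j : ℚ) = ((n:ℚ)+1) * (n.descFactorial j : ℚ) := by
    rw [← Nat.cast_mul, hnat]; push_cast; ring
  rw [h2] at hq ⊢
  linear_combination hq

lemma eval_Lp (n : ℕ) (x : ℚ) : (Lp n x).eval (-x - n) = n.factorial := by
  unfold Lp
  rw [eval_finset_sum]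
  have he : ∀ k ∈ range (n+1),
      eval (-x - n) (C ((n.choose k : ℚ) * (x + k)^k) * (X + C ((n : ℚ) - k))^(n - k))
      = (-1:ℚ)^n * ((-1:ℚ)^k * (n.choose k) * (x + k)^n) := by
    intro k hk
    have hk' : k ≤ n := by simp at hk; omega
    rw [eval_mul, eval_C, eval_pow, eval_add, eval_X, eval_C]
    have h1 : -x - (n:ℚ) + ((n:ℚ) - k) = -(x + k) := by ring
    rw [h1, neg_pow]
    have h2 : (-1:ℚ)^(n-k) = (-1:ℚ)^n * (-1:ℚ)^k := by
      have : (-1:ℚ)^(n-k) * (-1:ℚ)^k = (-1:ℚ)^n := by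
        rw [← pow_add]; congr 1; omega
      have hk2 : ((-1:ℚ)^k)*((-1:ℚ)^k) = 1 := by
        rw [← pow_add, ← two_mul, pow_mul]; norm_num
      calc (-1:ℚ)^(n-k) = (-1:ℚ)^(n-k) * (((-1:ℚ)^k)*((-1:ℚ)^k)) := by rw [hk2, mul_one]
        _ = ((-1:ℚ)^(n-k) * (-1:ℚ)^k) * (-1:ℚ)^k := by ring
        _ = (-1:ℚ)^n * (-1:ℚ)^k := by rw [this]
    have h3 : (x + (k:ℚ))^k * (x + k)^(n-k) = (x+k)^n := by
      rw [← pow_add]; congr 1; omega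
    rw [h2]
    calc (n.choose k : ℚ) * (x + k)^k * ((-1:ℚ)^n * (-1:ℚ)^k * (x + k)^(n-k))
        = (-1:ℚ)^n * ((-1:ℚ)^k * (n.choose k) * ((x + k)^k * (x + k)^(n-k))) := by ring
      _ = _ := by rw [h3]
  rw [sum_congr rfl he, ← Finset.mul_sum]
  have := Sn_eq n x n le_rfl
  rw [if_pos rfl] at this
  rw [show ∑ k ∈ range (n+1), (-1:ℚ)^k * (n.choose k) * (x + k)^n = Sn n x n from rfl, this]
  calc (-1:ℚ)^n * ((-1:ℚ)^n * n.factorial) = ((-1:ℚ)*(-1:ℚ))^n * n.factorial := by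
        rw [mul_pow]; ring
    _ = n.factorial := by norm_num

lemma eval_Rp (n : ℕ) (x : ℚ) : (Rp n x).eval (-x - n) = n.factorial := by
  unfold Rp
  rw [eval_finset_sum]
  rw [Finset.sum_eq_single n]
  · rw [eval_mul, eval_C, eval_pow, eval_add, eval_X, eval_C, Nat.sub_self, pow_zero, mul_one,
      Nat.descFactorial_self]
  · intro j hj hne
    rw [eval_mul, eval_C, eval_pow, eval_add, eval_X, eval_C]
    have : -x - (n:ℚ) + (x + n) = 0 := by ring
    rw [this, zero_pow (by simp at hj; omega), mul_zero]
  · intro h; exact absurd (self_mem_range_succ n) h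

lemma Lp_eq_Rp (n : ℕ) (x : ℚ) : Lp n x = Rp n x := by
  induction n generalizing x with
  | zero => simp [Lp, Rp]
  | succ n IH =>
    have hd : derivative (Lp (n+1) x - Rp (n+1) x) = 0 := by
      rw [derivative_sub, derivative_Lp, derivative_Rp, IH x, sub_self]
    have hC := eq_C_of_derivative_eq_zero hd
    have he : (Lp (n+1) x - Rp (n+1) x).eval (-x - ((n+1:ℕ):ℚ)) = 0 := by
      rw [eval_sub, eval_Lp, eval_Rp, sub_self]
    rw [hC, eval_C] at he
    have hz : Lp (n+1) x - Rp (n+1) x = 0 := by rw [hC, he, map_zero]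
    exact sub_eq_zero.mp hz

lemma eval_Lp_zero (n : ℕ) : (Lp n 0).eval 0
    = ((∑ k ∈ range (n+1), n.choose k * k^k * (n-k)^(n-k) : ℕ) : ℚ) := by
  unfold Lp
  rw [eval_finset_sum, Nat.cast_sum]
  apply sum_congr rfl
  intro k hk
  have hk' : k ≤ n := by simp at hk; omega
  rw [eval_mul, eval_C, eval_pow, eval_add, eval_X, eval_C, zero_add, zero_add]
  push_cast [Nat.cast_sub hk']
  ring

lemma eval_Rp_zero (n : ℕ) : (Rp n 0).eval 0
    = (n.factorial : ℚ) * ∑ k ∈ range (n+1), (n:ℚ)^k / k.factorial := by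
  unfold Rp
  rw [eval_finset_sum]
  have he : ∀ j ∈ range (n+1),
      eval 0 (C ((n.descFactorial j : ℚ)) * (X + C ((0:ℚ) + n))^(n - j))
      = (n.descFactorial j : ℚ) * (n:ℚ)^(n-j) := by
    intro j _
    rw [eval_mul, eval_C, eval_pow, eval_add, eval_X, eval_C, zero_add, zero_add]
  rw [sum_congr rfl he, Finset.mul_sum,
    ← Finset.sum_range_reflect (fun k => (n.factorial:ℚ) * ((n:ℚ)^k / k.factorial)) (n+1)]
  apply sum_congr rfl
  intro j hj
  have hj' : j ≤ n := by simp at hj; omega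
  simp only [Nat.add_sub_cancel]
  have hfac := Nat.factorial_mul_descFactorial hj'
  have hfacq : ((n-j).factorial : ℚ) * (n.descFactorial j : ℚ) = (n.factorial : ℚ) := by
    exact_mod_cast congrArg (Nat.cast (R := ℚ)) hfac
  have hne : ((n-j).factorial : ℚ) ≠ 0 := by positivity
  field_simp
  linear_combination hfacq

lemma nat_split (m : ℕ) : ∑ k ∈ range (m+2), (m+1).choose k * k^k * (m+1-k)^(m+1-k)
    = A (m+1) + ((m+1)^(m+1) + (m+1)^(m+1)) := by
  rw [sum_range_succ, sum_range_succ']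
  have hA : A (m+1) = ∑ i ∈ range m,
      (m+1).choose (1+i) * (1+i)^(1+i) * (m+1-(1+i))^(m+1-(1+i)) := by
    rw [A, ← Finset.Ico_add_one_left_eq_Ioo, Finset.sum_Ico_eq_sum_range]
    simp only [zero_add, Nat.add_sub_cancel]
  rw [hA]
  simp only [Nat.choose_self, Nat.choose_zero_right, Nat.sub_self, pow_zero, one_mul, mul_one,
    Nat.sub_zero, Nat.pow_zero]
  have : ∀ i ∈ range m, (m+1).choose (i+1) * (i+1)^(i+1) * (m+1-(i+1))^(m+1-(i+1))
      = (m+1).choose (1+i) * (1+i)^(1+i) * (m+1-(1+i))^(m+1-(1+i)) := by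
    intro i _; rw [Nat.add_comm 1 i]
  rw [sum_congr rfl this]
  ring

/-- `A_n = n! · Σ_{k=0}^{n-2} n^k / k!` for all `n ≥ 1`. -/
theorem A_eq (n : ℕ) (hn : 1 ≤ n) :
    (A n : ℚ) = n.factorial * ∑ k ∈ Finset.range (n - 1), (n : ℚ) ^ k / k.factorial := by
  obtain ⟨m, rfl⟩ : ∃ m, n = m + 1 := ⟨n - 1, by omega⟩
  have hkey := congrArg (eval 0) (Lp_eq_Rp (m+1) 0)
  rw [eval_Lp_zero, eval_Rp_zero, nat_split m] at hkey
  rw [show m + 1 + 1 = m + 2 from rfl, sum_range_succ, sum_range_succ] at hkey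
  have hm0 : (m.factorial : ℚ) ≠ 0 := by positivity
  have h1 : ((m+1).factorial : ℚ) * (((m+1:ℕ):ℚ)^m / m.factorial) = ((m+1:ℕ):ℚ)^(m+1) := by
    rw [Nat.factorial_succ]
    push_cast
    field_simp
    ring
  have h2 : ((m+1).factorial:ℚ) * (((m+1:ℕ):ℚ)^(m+1) / (m+1).factorial) = ((m+1:ℕ):ℚ)^(m+1) := by
    have : ((m+1).factorial:ℚ) ≠ 0 := by positivity
    field_simp
  simp only [Nat.add_sub_cancel]
  push_cast at hkey h1 h2 ⊢
  rw [mul_add, mul_add] at hkey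
  linarith [hkey, h1, h2]

end Aux
end

section
/- For every integer k ≥ 0, D^k(Z) is a polynomial in Z with nonnegative integer coefficients of degree 2k+1, with leading coefficient (2k−1)!! (the double factorial), where D = q·d/dq. -/
open Polynomial Finset
open scoped fwdDiff

section AbelIdentity


lemma fwd_poly_zero : ∀ n : ℕ, ∀ P : Polynomial ℚ, P.natDegree < n →
    (fwdDiff (1:ℚ))^[n] (fun x : ℚ => P.eval x) = 0 := by
  intro n
  induction n with
  | zero => intro P h; omega
  | succ n ih =>
    intro P h
    have hΔ : fwdDiff (1:ℚ) (fun x : ℚ => P.eval x)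
        = fun x : ℚ => (P.comp (X + Polynomial.C 1) - P).eval x := by
      funext x
      simp [fwdDiff, Polynomial.eval_comp]
    rw [Function.iterate_succ_apply, hΔ]
    rcases Nat.eq_zero_or_pos P.natDegree with h0 | hpos
    · obtain ⟨c, rfl⟩ := Polynomial.natDegree_eq_zero.mp h0
      simp only [Polynomial.C_comp, sub_self, Polynomial.eval_zero]
      exact Function.iterate_fixed (by funext x; simp [fwdDiff]) n
    · apply ih
      have hPne : P ≠ 0 := fun hP => by simp [hP] at hpos
      have hq1 : (X + Polynomial.C (1:ℚ)).natDegree = 1 := Polynomial.natDegree_X_add_C 1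
      have hq2 : (X + Polynomial.C (1:ℚ)).leadingCoeff = 1 := (Polynomial.monic_X_add_C 1)
      have hcompdeg : (P.comp (X + Polynomial.C 1)).natDegree = P.natDegree := by
        rw [Polynomial.natDegree_comp, hq1, mul_one]
      have hcomplc : (P.comp (X + Polynomial.C 1)).leadingCoeff = P.leadingCoeff := by
        rw [Polynomial.leadingCoeff_comp (by rw [hq1]; exact one_ne_zero), hq2, one_pow, mul_one]
      have hcompne : P.comp (X + Polynomial.C 1) ≠ 0 := by
        intro hc
        apply hPne
        rw [← Polynomial.leadingCoeff_eq_zero, ← hcomplc, hc, Polynomial.leadingCoeff_zero]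
      have hdeq : (P.comp (X + Polynomial.C 1)).degree = P.degree := by
        rw [Polynomial.degree_eq_natDegree hcompne, Polynomial.degree_eq_natDegree hPne, hcompdeg]
      have hdlt : (P.comp (X + Polynomial.C 1) - P).degree < P.degree := by
        have := Polynomial.degree_sub_lt hdeq hcompne hcomplc
        rwa [hdeq] at this
      rcases eq_or_ne (P.comp (X + Polynomial.C 1) - P) 0 with hz | hnz
      · rw [hz]; simp; omega
      · have := Polynomial.natDegree_lt_natDegree hnz hdlt
        omega

lemma alt_sum_pow_zero (n : ℕ) (hn : 1 ≤ n) :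
    ∑ k ∈ Finset.range (n + 1), ((-1 : ℚ)) ^ (n - k) * (n.choose k) * (k : ℚ) ^ (n - 1) = 0 := by
  have h := fwdDiff_iter_eq_sum_shift (1:ℚ) (fun x : ℚ => (X ^ (n-1) : Polynomial ℚ).eval x) n 0
  rw [fwd_poly_zero n (X ^ (n-1)) (by simp; omega)] at h
  simp only [Pi.zero_apply, Polynomial.eval_pow, Polynomial.eval_X] at h
  rw [eq_comm] at h
  calc ∑ k ∈ Finset.range (n + 1), ((-1 : ℚ)) ^ (n - k) * (n.choose k) * (k : ℚ) ^ (n - 1)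
      = ∑ k ∈ Finset.range (n + 1), ((-1 : ℤ) ^ (n - k) * (n.choose k)) • ((0 : ℚ) + k • (1:ℚ)) ^ (n-1) := by
        apply Finset.sum_congr rfl
        intro k _
        rw [zsmul_eq_mul]
        push_cast
        ring
    _ = 0 := h

/-- The Abel-type polynomial `Σ_{k=1}^n C(n,k) k^{k-1} (X + n - k)^{n-k}`. -/
noncomputable def Lpoly (n : ℕ) : Polynomial ℚ :=
  ∑ k ∈ Finset.Icc 1 n,
    Polynomial.C ((n.choose k : ℚ) * (k : ℚ) ^ (k - 1)) * (X + Polynomial.C ((n - k : ℕ) : ℚ)) ^ (n - k)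

lemma Lpoly_eq (n : ℕ) (hn : 1 ≤ n) :
    Lpoly n = Polynomial.C (n : ℚ) * (X + Polynomial.C (n : ℚ)) ^ (n - 1) := by
  induction n with
  | zero => omega
  | succ n ih =>
    rcases Nat.eq_zero_or_pos n with rfl | hn1
    · simp [Lpoly]
    -- derivative equality
    have hderL : derivative (Lpoly (n + 1))
        = Polynomial.C ((n : ℚ) + 1) * ((Lpoly n).comp (X + Polynomial.C 1)) := by
      have hsplit : Finset.Icc 1 (n+1) = insert (n+1) (Finset.Icc 1 n) := by
        ext x; simp only [Finset.mem_Icc, Finset.mem_insert]; omega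
      rw [Lpoly, derivative_sum, Lpoly, hsplit, Finset.sum_insert (by simp),
        Polynomial.sum_comp, Finset.mul_sum]
      have hlast : derivative (Polynomial.C (((n+1).choose (n+1) : ℚ) * ((n+1 : ℕ) : ℚ) ^ ((n+1) - 1)) *
          (X + Polynomial.C (((n+1) - (n+1) : ℕ) : ℚ)) ^ ((n+1) - (n+1))) = 0 := by
        rw [Nat.sub_self, pow_zero, mul_one, derivative_C]
      rw [hlast, zero_add]
      apply Finset.sum_congr rfl
      intro k hk
      simp only [Finset.mem_Icc] at hk
      have hk1 : 1 ≤ k := hk.1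
      have hkn : k ≤ n := hk.2
      rw [derivative_C_mul, derivative_pow, derivative_add, derivative_X, derivative_C, add_zero,
        mul_one]
      have hcast : (1:ℚ) + ((n - k : ℕ) : ℚ) = ((n + 1 - k : ℕ) : ℚ) := by
        push_cast [Nat.cast_sub hkn, Nat.cast_sub (by omega : k ≤ n + 1)]
        ring
      have hcomp : ((X + Polynomial.C (((n - k : ℕ)) : ℚ)) ^ (n - k)).comp (X + Polynomial.C 1)
          = (X + Polynomial.C (((n + 1 - k : ℕ)) : ℚ)) ^ (n - k) := by
        rw [Polynomial.pow_comp, Polynomial.add_comp, Polynomial.X_comp, Polynomial.C_comp,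
          add_assoc, ← Polynomial.C_add, hcast]
      have he : (n + 1 - k) - 1 = n - k := by omega
      rw [Polynomial.mul_comp, Polynomial.C_comp, hcomp, he, ← mul_assoc, ← Polynomial.C_mul]
      have hch : ((n+1).choose k : ℚ) * ((n + 1 - k : ℕ) : ℚ) = ((n:ℚ)+1) * (n.choose k : ℚ) := by
        have h0 := Nat.choose_mul_succ_eq n k
        have h1 : ((n.choose k * (n + 1) : ℕ) : ℚ) = (((n + 1).choose k * (n + 1 - k) : ℕ) : ℚ) := by
          exact_mod_cast congrArg (Nat.cast : ℕ → ℚ) h0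
        push_cast at h1
        linarith
      have hs : ((n+1).choose k : ℚ) * (k:ℚ)^(k-1) * ((n + 1 - k : ℕ) : ℚ)
          = ((n:ℚ)+1) * ((n.choose k : ℚ) * (k:ℚ)^(k-1)) := by
        calc ((n+1).choose k : ℚ) * (k:ℚ)^(k-1) * ((n + 1 - k : ℕ) : ℚ)
            = (((n+1).choose k : ℚ) * ((n + 1 - k : ℕ) : ℚ)) * (k:ℚ)^(k-1) := by ring
          _ = ((n:ℚ)+1) * ((n.choose k : ℚ) * (k:ℚ)^(k-1)) := by rw [hch]; ring
      rw [hs, Polynomial.C_mul, mul_assoc]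
    -- derivative of RHS
    have hderR : derivative (Polynomial.C ((n+1 : ℕ) : ℚ) * (X + Polynomial.C ((n+1 : ℕ) : ℚ)) ^ ((n+1) - 1))
        = Polynomial.C ((n : ℚ) + 1) *
          ((Polynomial.C (n : ℚ) * (X + Polynomial.C (n : ℚ)) ^ (n - 1)).comp (X + Polynomial.C 1)) := by
      rw [derivative_C_mul, derivative_pow, derivative_add, derivative_X, derivative_C, add_zero,
        mul_one, Polynomial.mul_comp, Polynomial.C_comp, Polynomial.pow_comp, Polynomial.add_comp,
        Polynomial.X_comp, Polynomial.C_comp]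
      have h1 : (n + 1) - 1 = n := by omega
      have h2 : X + Polynomial.C (1:ℚ) + Polynomial.C (n:ℚ) = X + Polynomial.C ((n+1 : ℕ) : ℚ) := by
        rw [add_assoc, ← Polynomial.C_add]
        push_cast
        ring
      rw [h1, h2]
      push_cast
      ring
    have ihn := ih hn1
    set R : Polynomial ℚ := Polynomial.C ((n+1 : ℕ) : ℚ) * (X + Polynomial.C ((n+1 : ℕ) : ℚ)) ^ ((n+1) - 1) with hR
    have hder0 : derivative (Lpoly (n+1) - R) = 0 := by
      rw [derivative_sub, hderL, ihn, hR, hderR, sub_self]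
    have hC := Polynomial.eq_C_of_derivative_eq_zero hder0
    -- evaluation at -(n+1)
    set x0 : ℚ := -((n+1 : ℕ) : ℚ) with hx0
    have hevalL : (Lpoly (n+1)).eval x0 = 0 := by
      rw [Lpoly, Polynomial.eval_finset_sum]
      have hterm : ∀ k ∈ Finset.Icc 1 (n+1),
          (Polynomial.C (((n+1).choose k : ℚ) * (k : ℚ) ^ (k - 1)) *
            (X + Polynomial.C (((n+1) - k : ℕ) : ℚ)) ^ ((n+1) - k)).eval x0
          = (-1 : ℚ) ^ ((n+1) - k) * ((n+1).choose k : ℚ) * (k : ℚ) ^ ((n+1) - 1) := by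
        intro k hk
        simp only [Finset.mem_Icc] at hk
        have hx : x0 + (((n+1) - k : ℕ) : ℚ) = -(k : ℚ) := by
          rw [hx0, Nat.cast_sub hk.2]
          ring
        rw [Polynomial.eval_mul, Polynomial.eval_C, Polynomial.eval_pow, Polynomial.eval_add,
          Polynomial.eval_X, Polynomial.eval_C, hx, neg_pow]
        have hpow : (k : ℚ) ^ (k - 1) * (k : ℚ) ^ ((n+1) - k) = (k : ℚ) ^ ((n+1) - 1) := by
          rw [← pow_add]
          congr 1
          omega
        rw [← hpow]
        ring
      rw [Finset.sum_congr rfl hterm]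
      have halt := alt_sum_pow_zero (n+1) (by omega)
      have hins : Finset.range ((n+1) + 1) = insert 0 (Finset.Icc 1 (n+1)) := by
        ext x; simp only [Finset.mem_range, Finset.mem_insert, Finset.mem_Icc]; omega
      rw [hins, Finset.sum_insert (by simp)] at halt
      have h0 : (-1 : ℚ) ^ ((n+1) - 0) * ((n+1).choose 0 : ℚ) * ((0 : ℕ) : ℚ) ^ ((n+1) - 1) = 0 := by
        have h' : (n+1) - 1 ≠ 0 := by omega
        rw [Nat.cast_zero, zero_pow h', mul_zero]
      rw [h0, zero_add] at halt
      exact halt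
    have hevalR : R.eval x0 = 0 := by
      rw [hR, Polynomial.eval_mul, Polynomial.eval_C, Polynomial.eval_pow, Polynomial.eval_add,
        Polynomial.eval_X, Polynomial.eval_C, hx0]
      have : -((n+1 : ℕ) : ℚ) + ((n+1 : ℕ) : ℚ) = 0 := by ring
      rw [this, zero_pow (by omega : (n+1) - 1 ≠ 0), mul_zero]
    have hc0 : (Lpoly (n+1) - R).coeff 0 = 0 := by
      have := congrArg (Polynomial.eval x0) hC
      rw [Polynomial.eval_sub, hevalL, hevalR, Polynomial.eval_C, sub_zero] at this
      exact this.symm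
    have hz : Lpoly (n+1) - R = 0 := by rw [hC, hc0, Polynomial.C_0]
    exact sub_eq_zero.mp hz

lemma abel_identity (n : ℕ) (hn : 1 ≤ n) :
    ∑ k ∈ Finset.Icc 1 n, (n.choose k : ℚ) * (k : ℚ) ^ (k - 1) * ((n - k : ℕ) : ℚ) ^ (n - k)
      = (n : ℚ) ^ n := by
  have h := congrArg (Polynomial.eval (0 : ℚ)) (Lpoly_eq n hn)
  rw [Lpoly, Polynomial.eval_finset_sum] at h
  rw [Polynomial.eval_mul, Polynomial.eval_C, Polynomial.eval_pow, Polynomial.eval_add,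
    Polynomial.eval_X, Polynomial.eval_C, zero_add] at h
  have hr : (n : ℚ) * (n : ℚ) ^ (n - 1) = (n : ℚ) ^ n := by
    rw [← pow_succ']
    congr 1
    omega
  rw [hr] at h
  rw [← h]
  apply Finset.sum_congr rfl
  intro k hk
  rw [Polynomial.eval_mul, Polynomial.eval_C, Polynomial.eval_pow, Polynomial.eval_add,
    Polynomial.eval_X, Polynomial.eval_C, zero_add]

end AbelIdentity

/-- `Z(q) = Σ_{n≥1} n^n q^n / n!`. -/
noncomputable def Z : PowerSeries ℚ :=
  PowerSeries.mk fun n => if n = 0 then 0 else (n : ℚ) ^ n / n.factorial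

/-- The Euler derivation `D = q · d/dq`. -/
noncomputable def D (f : PowerSeries ℚ) : PowerSeries ℚ :=
  PowerSeries.mk fun n => (n : ℚ) * PowerSeries.coeff n f

/-- The tree function `W(q) = Σ_{n≥1} n^{n-1} q^n / n!`. -/
noncomputable def W : PowerSeries ℚ :=
  PowerSeries.mk fun n => if n = 0 then 0 else (n : ℚ) ^ (n - 1) / n.factorial

lemma derivativeFun_C' (a : ℚ) : PowerSeries.derivativeFun (PowerSeries.C a) = 0 :=
  PowerSeries.derivative_C

lemma coeff_derivativeFun' (f : PowerSeries ℚ) (n : ℕ) :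
    PowerSeries.coeff n f.derivativeFun = PowerSeries.coeff (n + 1) f * (n + 1) :=
  PowerSeries.coeff_derivative f n

lemma D_eq (f : PowerSeries ℚ) : D f = PowerSeries.X * PowerSeries.derivativeFun f := by
  ext n
  cases n with
  | zero =>
    rw [D, PowerSeries.coeff_mk, PowerSeries.coeff_zero_X_mul, Nat.cast_zero, zero_mul]
  | succ n =>
    rw [D, PowerSeries.coeff_mk, PowerSeries.coeff_succ_X_mul, coeff_derivativeFun']
    push_cast
    ring

lemma D_add (f g : PowerSeries ℚ) : D (f + g) = D f + D g := by
  rw [D_eq, D_eq, D_eq, PowerSeries.derivativeFun_add, mul_add]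

lemma D_mul (f g : PowerSeries ℚ) : D (f * g) = D f * g + f * D g := by
  rw [D_eq, D_eq, D_eq, PowerSeries.derivativeFun_mul, smul_eq_mul, smul_eq_mul]
  ring

lemma D_natCast (a : ℕ) : D ((a : ℚ) • (1 : PowerSeries ℚ)) = 0 := by
  rw [D_eq, PowerSeries.smul_eq_C_mul, mul_one, derivativeFun_C', mul_zero]

lemma D_C (a : ℚ) : D (PowerSeries.C a) = 0 := by
  rw [D_eq, derivativeFun_C', mul_zero]

lemma D_W : D W = Z := by
  ext n
  rw [D, PowerSeries.coeff_mk, W, Z, PowerSeries.coeff_mk, PowerSeries.coeff_mk]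
  rcases eq_or_ne n 0 with rfl | hn
  · simp
  · rw [if_neg hn, if_neg hn]
    have : (n : ℚ) * (n : ℚ) ^ (n - 1) = (n : ℚ) ^ n := by
      rw [← pow_succ']
      congr 1
      omega
    rw [← this]
    ring

lemma Z_eq : Z = W + W * Z := by
  ext n
  rw [map_add]
  rcases eq_or_ne n 0 with rfl | hn
  · simp [Z, W, PowerSeries.coeff_mul]
  · have hn1 : 1 ≤ n := by omega
    have hsub : Finset.Icc 1 (n - 1) ⊆ Finset.range (n + 1) := by
      intro a ha
      simp only [Finset.mem_Icc] at ha
      simp only [Finset.mem_range]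
      omega
    have hconv : PowerSeries.coeff n (W * Z)
        = ∑ a ∈ Finset.Icc 1 (n - 1),
          (a : ℚ) ^ (a - 1) / a.factorial * ((((n - a : ℕ)) : ℚ) ^ (n - a) / (n - a).factorial) := by
      rw [PowerSeries.coeff_mul, Finset.Nat.sum_antidiagonal_eq_sum_range_succ_mk]
      rw [← Finset.sum_subset hsub]
      · apply Finset.sum_congr rfl
        intro a ha
        simp only [Finset.mem_Icc] at ha
        dsimp only
        rw [W, Z, PowerSeries.coeff_mk, PowerSeries.coeff_mk, if_neg (by omega), if_neg (by omega)]
      · intro a ha hnot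
        simp only [Finset.mem_range] at ha
        simp only [Finset.mem_Icc, not_and_or, not_le] at hnot
        dsimp only
        rcases hnot with h1 | h1
        · have : a = 0 := by omega
          subst this
          rw [W, PowerSeries.coeff_mk, if_pos rfl, zero_mul]
        · have : n - a = 0 := by omega
          rw [Z, PowerSeries.coeff_mk, this, if_pos rfl, mul_zero]
    rw [hconv, Z, W, PowerSeries.coeff_mk, PowerSeries.coeff_mk, if_neg hn, if_neg hn]
    -- use the Abel identity
    have habel := abel_identity n hn1
    have hsplit : Finset.Icc 1 n = insert n (Finset.Icc 1 (n - 1)) := by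
      ext x; simp only [Finset.mem_Icc, Finset.mem_insert]; omega
    rw [hsplit, Finset.sum_insert (by simp only [Finset.mem_Icc]; omega)] at habel
    have hlast : (n.choose n : ℚ) * (n : ℚ) ^ (n - 1) * ((n - n : ℕ) : ℚ) ^ (n - n) = (n : ℚ) ^ (n - 1) := by
      rw [Nat.choose_self, Nat.sub_self]
      norm_num
    rw [hlast] at habel
    -- rewrite terms of habel using factorials
    have hterms : ∀ a ∈ Finset.Icc 1 (n - 1),
        (n.choose a : ℚ) * (a : ℚ) ^ (a - 1) * ((n - a : ℕ) : ℚ) ^ (n - a)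
          = n.factorial * ((a : ℚ) ^ (a - 1) / a.factorial *
              ((((n - a : ℕ)) : ℚ) ^ (n - a) / (n - a).factorial)) := by
      intro a ha
      simp only [Finset.mem_Icc] at ha
      rw [Nat.cast_choose ℚ (by omega : a ≤ n)]
      have h1 : (a.factorial : ℚ) ≠ 0 := by exact_mod_cast a.factorial_ne_zero
      have h2 : ((n - a).factorial : ℚ) ≠ 0 := by exact_mod_cast (n - a).factorial_ne_zero
      field_simp
    rw [Finset.sum_congr rfl hterms, ← Finset.mul_sum] at habel
    -- conclude
    have hfac : (n.factorial : ℚ) ≠ 0 := by exact_mod_cast n.factorial_ne_zero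
    rw [← habel]
    field_simp

lemma D_Z : D Z = Z * (1 + Z) ^ 2 := by
  have h1 := Z_eq
  have h2 := D_W
  have hDZ : D Z = Z + Z * Z + W * D Z := by
    calc D Z = D (W + W * Z) := by rw [← h1]
      _ = D W + (D W * Z + W * D Z) := by rw [D_add, D_mul]
      _ = Z + Z * Z + W * D Z := by rw [h2]; ring
  have hunit : (1 - W) * (1 + Z) = 1 := by
    calc (1 - W) * (1 + Z) = 1 + Z - (W + W * Z) := by ring
      _ = 1 := by rw [← h1]; ring
  have h3 : (1 - W) * D Z = Z * (1 + Z) := by linear_combination hDZ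
  calc D Z = (1 - W) * (1 + Z) * D Z := by rw [hunit, one_mul]
    _ = (1 + Z) * ((1 - W) * D Z) := by ring
    _ = (1 + Z) * (Z * (1 + Z)) := by rw [h3]
    _ = Z * (1 + Z) ^ 2 := by ring

lemma D_eval₂ (p : Polynomial ℕ) (f : PowerSeries ℚ) :
    D (Polynomial.eval₂ (Nat.castRingHom (PowerSeries ℚ)) f p)
      = Polynomial.eval₂ (Nat.castRingHom (PowerSeries ℚ)) f (Polynomial.derivative p) * D f := by
  induction p using Polynomial.induction_on with
  | C a =>
    rw [Polynomial.eval₂_C, Polynomial.derivative_C, Polynomial.eval₂_zero, zero_mul]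
    have : (Nat.castRingHom (PowerSeries ℚ)) a = PowerSeries.C (a : ℚ) := by
      simp [map_natCast]
    rw [this, D_C]
  | add p q hp hq =>
    rw [Polynomial.eval₂_add, D_add, hp, hq, Polynomial.derivative_add, Polynomial.eval₂_add,
      add_mul]
  | monomial n a ih =>
    have hsplit : (Polynomial.C a * Polynomial.X ^ (n + 1) : Polynomial ℕ)
        = (Polynomial.C a * Polynomial.X ^ n) * Polynomial.X := by ring
    have hd : Polynomial.derivative (Polynomial.C a * Polynomial.X ^ n * Polynomial.X)
        = Polynomial.derivative (Polynomial.C a * Polynomial.X ^ n) * Polynomial.X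
          + Polynomial.C a * Polynomial.X ^ n := by
      rw [Polynomial.derivative_mul, Polynomial.derivative_X, mul_one]
    rw [hsplit, Polynomial.eval₂_mul, Polynomial.eval₂_X, D_mul, ih, hd]
    simp only [Polynomial.eval₂_add, Polynomial.eval₂_mul, Polynomial.eval₂_X]
    ring

lemma doubleFact_step (k : ℕ) : (2 * (k + 1) - 1).doubleFactorial
    = (2 * k + 1) * (2 * k - 1).doubleFactorial := by
  cases k with
  | zero => decide
  | succ k =>
    have h1 : 2 * (k + 1 + 1) - 1 = (2 * (k + 1) - 1) + 2 := by omega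
    have h2 : (2 * (k + 1) - 1) + 2 = 2 * (k + 1) + 1 := by omega
    rw [h1, Nat.doubleFactorial_add_two, h2]

/-- For every `k ≥ 0`, `D^k(Z)` is a polynomial in `Z` with nonnegative integer
coefficients, of degree `2k+1`, with leading coefficient `(2k-1)!!`. -/
theorem D_iter_Z_poly (k : ℕ) :
    ∃ P : Polynomial ℕ,
      P.natDegree = 2 * k + 1 ∧
      P.leadingCoeff = Nat.doubleFactorial (2 * k - 1) ∧
      D^[k] Z = Polynomial.eval₂ (Nat.castRingHom (PowerSeries ℚ)) Z P := by
  induction k with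
  | zero =>
    refine ⟨Polynomial.X, ?_, ?_, ?_⟩
    · simp
    · simp [Nat.doubleFactorial]
    · simp [Polynomial.eval₂_X]
  | succ k ih =>
    obtain ⟨P, hdeg, hlead, heq⟩ := ih
    set S : Polynomial ℕ := Polynomial.X * (1 + Polynomial.X) ^ 2 with hS
    have h1X : ((1 : Polynomial ℕ) + Polynomial.X).Monic := by
      rw [add_comm]
      simpa using Polynomial.monic_X_add_C (1 : ℕ)
    have h1Xdeg : ((1 : Polynomial ℕ) + Polynomial.X).natDegree = 1 := by
      rw [add_comm]
      simpa using Polynomial.natDegree_X_add_C (1 : ℕ)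
    have hSmonic : S.Monic := Polynomial.monic_X.mul (h1X.pow 2)
    have hSdeg : S.natDegree = 3 := by
      rw [hS, Polynomial.Monic.natDegree_mul Polynomial.monic_X (h1X.pow 2),
        Polynomial.natDegree_X, Polynomial.Monic.natDegree_pow h1X, h1Xdeg]
    set P' : Polynomial ℕ := Polynomial.derivative P with hP'
    have hP'coeff : P'.coeff (2 * k) = (2 * k + 1) * (2 * k - 1).doubleFactorial := by
      rw [hP', Polynomial.coeff_derivative]
      have : P.coeff (2 * k + 1) = P.leadingCoeff := by rw [Polynomial.leadingCoeff, hdeg]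
      rw [this, hlead]
      push_cast
      ring
    have hP'ne : P'.coeff (2 * k) ≠ 0 := by
      rw [hP'coeff]
      have := Nat.doubleFactorial_pos (2 * k - 1)
      positivity
    have hP'deg : P'.natDegree = 2 * k := by
      apply le_antisymm
      · have h1 : P.natDegree ≠ 0 := by omega
        have h2 := Polynomial.natDegree_derivative_lt h1
        rw [← hP'] at h2
        omega
      · exact Polynomial.le_natDegree_of_ne_zero hP'ne
    have hP'lead : P'.leadingCoeff = (2 * k + 1) * (2 * k - 1).doubleFactorial := by
      rw [Polynomial.leadingCoeff, hP'deg, hP'coeff]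
    have hP'nz : P' ≠ 0 := fun h => hP'ne (by rw [h, Polynomial.coeff_zero])
    have hSnz : S ≠ 0 := hSmonic.ne_zero
    refine ⟨P' * S, ?_, ?_, ?_⟩
    · rw [Polynomial.natDegree_mul hP'nz hSnz, hP'deg, hSdeg]
      ring
    · rw [Polynomial.leadingCoeff_mul, hP'lead, hSmonic.leadingCoeff, mul_one,
        doubleFact_step k]
    · rw [Function.iterate_succ_apply', heq, D_eval₂, Polynomial.eval₂_mul, D_Z]
      congr 1
      rw [hS, Polynomial.eval₂_mul, Polynomial.eval₂_X, Polynomial.eval₂_pow,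
        Polynomial.eval₂_add, Polynomial.eval₂_one, Polynomial.eval₂_X]
end
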